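/- arXiv:1303.2023 — 4 statements merged into one kernel-verified Lean document; each statement's English description precedes it below -/
import Mathlib

section
/- The coefficients C^n_k satisfy the recursion C^{n+1}_k = ∑_{i=1}^j (N(k − e_i, k_i − 1) / N(k, k_i)) · C^n_{k − e_i}, where the sum is over the j coordinates of k, e_i is the i-th standard basis vector, tuples with a zero coordinate are identified with the corresponding shorter tuple, and C^n_{k'} is the coefficient for the tuple k' of weight n (with C^1_{(1)} = 1). -/
/-!
Lowering one coordinate `v` of `k` to `v - 1` changes only the factor `v!` and the multiplicity
factors of `v` and `v - 1` in the denominator of `C^n_k`, which gives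
`N(k - eᵥ, v - 1) · C^n_{k - eᵥ} = v · N(k, v) · C^n_k`. Hence the right-hand side is
`(∑_v N(k, v) · v) · C^n_k = (n + 1) · C^n_k = C^{n+1}_k`.
-/

/-- The Faà di Bruno coefficient `C^n_k = (n!/∏ k_p!) / ∏_i N(k,i)!` for a
multiset (tuple up to order) `k`, where `N(k,i)` is the multiplicity of `i` in `k`. -/
noncomputable def faaC (n : ℕ) (k : Multiset ℕ) : ℚ :=
  (n.factorial : ℚ) /
    (((k.map Nat.factorial).prod : ℚ) * (k.toFinset.prod fun i => ((k.count i).factorial : ℚ)))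

open Finset

theorem Multiset.prod_count_factorial_cons {α : Type*} [DecidableEq α] (a : α)
    (m : Multiset α) :
    ∏ i ∈ (a ::ₘ m).toFinset, ((a ::ₘ m).count i).factorial =
      (m.count a + 1) * ∏ i ∈ m.toFinset, (m.count i).factorial := by
  have ha : a ∈ insert a m.toFinset := mem_insert_self a _
  have hm : ∏ i ∈ m.toFinset, (m.count i).factorial =
      ∏ i ∈ insert a m.toFinset, (m.count i).factorial :=
    prod_subset (subset_insert a _) fun i _ hi => by
      rw [Multiset.count_eq_zero.2 (by simpa using hi), Nat.factorial_zero]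
  rw [hm, Multiset.toFinset_cons, ← mul_prod_erase _ _ ha, ← mul_prod_erase _ _ ha,
    Multiset.count_cons_self, Nat.factorial_succ, mul_assoc]
  congr 2
  exact prod_congr rfl fun i hi => by rw [Multiset.count_cons_of_ne (ne_of_mem_erase hi)]

theorem faaC_cons (n a : ℕ) (m : Multiset ℕ) :
    faaC n (a ::ₘ m) = faaC n m / (a.factorial * (m.count a + 1)) := by
  have := congrArg (Nat.cast (R := ℚ)) (Multiset.prod_count_factorial_cons a m)
  push_cast at this
  rw [faaC, faaC, this, Multiset.map_cons, Multiset.prod_cons, div_div]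
  push_cast
  ring

theorem faaC_succ (n : ℕ) (k : Multiset ℕ) : faaC (n + 1) k = (n + 1) * faaC n k := by
  rw [faaC, faaC, Nat.factorial_succ, Nat.cast_mul, mul_div_assoc, Nat.cast_succ]

theorem count_mul_faaC_cons_pred (n : ℕ) {v : ℕ} (hv : 0 < v) (m : Multiset ℕ) :
    ((v - 1) ::ₘ m).count (v - 1) * faaC n ((v - 1) ::ₘ m) =
      v * (v ::ₘ m).count v * faaC n (v ::ₘ m) := by
  obtain ⟨u, rfl⟩ := Nat.exists_eq_add_one_of_ne_zero hv.ne'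
  simp only [add_tsub_cancel_right, Multiset.count_cons_self, faaC_cons, Nat.factorial_succ]
  push_cast
  field_simp

-- The sum over the coordinates of `k` is grouped by their common value `v`, and `k - eᵥ` is
-- encoded as `k.erase v + {v - 1}`.
/-- The recursion for the coefficients: `C^1_{(1)} = 1` and
`C^{n+1}_k = ∑_i (N(k - eᵢ, kᵢ - 1)/N(k, kᵢ)) C^n_{k - eᵢ}`, where the sum over the
coordinates of `k` is grouped by the common value `v` of equal coordinates (there are
`N(k,v)` coordinates with value `v`, each contributing the same term), and `k - eᵢ`
is the multiset `k.erase v + {v-1}` (a coordinate equal to `0` contributes factors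
`0! = 1` and `N(·,0)! = 1` to `C^n`, so it may equivalently be deleted). -/
theorem faaC_recursion :
    faaC 1 {1} = 1 ∧
    ∀ (n : ℕ) (k : Multiset ℕ), (∀ i ∈ k, 0 < i) → k.sum = n + 1 →
      faaC (n + 1) k =
        ∑ v ∈ k.toFinset,
          (k.count v : ℚ) *
            ((((k.erase v + {v - 1}).count (v - 1) : ℚ)) / (k.count v : ℚ)) *
              faaC n (k.erase v + {v - 1}) := by
  refine ⟨by simp [faaC], fun n k hpos hsum => ?_⟩
  have hterm : ∀ v ∈ k.toFinset,
      (k.count v : ℚ) * (((k.erase v + {v - 1}).count (v - 1) : ℚ) / k.count v) *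
        faaC n (k.erase v + {v - 1}) = k.count v * v * faaC n k := by
    intro v hv
    have hvk := Multiset.mem_toFinset.1 hv
    have hcount : (k.count v : ℚ) ≠ 0 := by exact_mod_cast (Multiset.count_pos.2 hvk).ne'
    rw [mul_div_cancel₀ _ hcount, add_comm, Multiset.singleton_add,
      count_mul_faaC_cons_pred n (hpos v hvk), Multiset.cons_erase hvk]
    ring
  have hweight : ∑ v ∈ k.toFinset, (k.count v : ℚ) * v = n + 1 := by
    exact_mod_cast (sum_multiset_count k).symm.trans hsum
  rw [sum_congr rfl hterm, ← sum_mul, hweight, faaC_succ]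
end

section
/- For every n ≥ 2, ∑_{j=1}^n (−1)^{j−1} (j−1)! · (∑_{k ∈ M^j, |k| = n} C^n_k) = 0, where the inner sum runs over all decreasing tuples k = (k₁ ≥ ⋯ ≥ k_j ≥ 1) of positive integers with k₁ + ⋯ + k_j = n. -/
/-!
`C^n_k` counts the set partitions of `{1, …, n}` with block sizes `k`, so
`B(n, j) := ∑_{k ⊢ n, |k| = j} C^n_k` satisfies `(j+1) B(n, j+1) = ∑_{a ≥ 1} C(n,a) B(n-a, j)`
(mark one block, of size `a`, and remove it); on the multiset side the marking is done by
weighting each partition with the multiplicities of its parts, which add up to `j + 1`. This is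
the coefficient form of `(j+1) E_{j+1} = (eˣ - 1) E_j` for the exponential generating functions,
so `B(n, j) = n!/j! · [xⁿ] (eˣ - 1)^j`. The alternating sum is therefore `n!` times the
`n`-th coefficient of `L_n = ∑_{j=1}^n (-1)^(j-1) (eˣ - 1)^j / j`, a truncation of
`log (1 + (eˣ - 1)) = x`. Indeed `L_n' = 1 - (1 - eˣ)^n` by the geometric sum, and this has no
terms in degrees `1, …, n - 1`.
-/

open scoped Nat
open PowerSeries

theorem Multiset.prod_factorial_count_cons {α : Type*} [DecidableEq α] (a : α) (t : Multiset α) :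
    ∏ i ∈ (a ::ₘ t).toFinset, ((a ::ₘ t).count i)! =
      (t.count a + 1) * ∏ i ∈ t.toFinset, (t.count i)! := by
  have hext : ∏ i ∈ t.toFinset, (t.count i)! = ∏ i ∈ insert a t.toFinset, (t.count i)! :=
    Finset.prod_subset (Finset.subset_insert a _) fun i _ hi => by
      rw [Multiset.count_eq_zero.mpr (by simpa using hi), Nat.factorial_zero]
  have hne : ∀ i ∈ (insert a t.toFinset).erase a, ((a ::ₘ t).count i)! = (t.count i)! :=
    fun i hi => by rw [Multiset.count_cons_of_ne (Finset.ne_of_mem_erase hi)]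
  rw [Multiset.toFinset_cons, hext, ← Finset.mul_prod_erase _ _ (Finset.mem_insert_self a _),
    ← Finset.mul_prod_erase _ _ (Finset.mem_insert_self a _), Finset.prod_congr rfl hne,
    Multiset.count_cons_self, Nat.factorial_succ, mul_assoc]

theorem count_mul_faaC_cons {n a : ℕ} (t : Multiset ℕ) (ha : a ≤ n) :
    ((a ::ₘ t).count a : ℚ) * faaC n (a ::ₘ t) = n.choose a * faaC (n - a) t := by
  have hcount := congrArg (Nat.cast (R := ℚ)) (Multiset.prod_factorial_count_cons a t)
  push_cast at hcount
  have hP : ((t.map Nat.factorial).prod : ℚ) ≠ 0 := by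
    exact_mod_cast (Multiset.prod_pos fun i hi => by
      obtain ⟨k, -, rfl⟩ := Multiset.mem_map.mp hi; exact Nat.factorial_pos k).ne'
  have hD : (∏ i ∈ t.toFinset, ((t.count i)! : ℚ)) ≠ 0 :=
    Finset.prod_ne_zero_iff.mpr fun i _ => by positivity
  rw [faaC, faaC, hcount, Multiset.map_cons, Multiset.prod_cons, Multiset.count_cons_self,
    Nat.cast_choose ℚ ha]
  push_cast
  field_simp

noncomputable def faaCSum (n j : ℕ) : ℚ :=
  ∑ p ∈ Finset.univ.filter fun p : n.Partition => p.parts.card = j, faaC n p.parts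

theorem faaCSum_zero_right (n : ℕ) : faaCSum n 0 = if n = 0 then 1 else 0 := by
  rcases n.eq_zero_or_pos with rfl | hn
  · simp [faaCSum, Finset.filter_true_of_mem, faaC]
  · have hempty : (Finset.univ.filter fun p : n.Partition => p.parts.card = 0) = ∅ :=
      Finset.filter_false_of_mem fun p _ hp => by
        have := p.parts_sum
        rw [Multiset.card_eq_zero.mp hp, Multiset.sum_zero] at this
        omega
    rw [faaCSum, hempty, Finset.sum_empty, if_neg hn.ne']

theorem sum_count_mul_faaC {n a : ℕ} (ha : 1 ≤ a) (han : a ≤ n) (j : ℕ) :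
    ∑ q ∈ Finset.univ.filter fun q : n.Partition => q.parts.card = j + 1,
        (q.parts.count a : ℚ) * faaC n q.parts = n.choose a * faaCSum (n - a) j := by
  let e := Nat.Partition.partitionWithPartEquiv ha han
  rw [faaCSum, Finset.mul_sum]
  symm
  refine Finset.sum_bij_ne_zero (fun p _ _ => (e.symm p).1) ?_ ?_ ?_ ?_
  · intro p hp _
    simp [e, (Finset.mem_filter.mp hp).2]
  · intro p _ _ p' _ _ h
    exact e.symm.injective (Subtype.ext h)
  · intro q hq hne
    have haq : a ∈ q.parts := Multiset.count_ne_zero.mp (by rintro h; simp [h] at hne)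
    refine ⟨e ⟨q, haq⟩, ?_, ?_, by simp⟩
    · simp [e, Multiset.card_erase_of_mem haq, (Finset.mem_filter.mp hq).2]
    · have hq : q.parts = a ::ₘ (e ⟨q, haq⟩).parts := by simp [e, Multiset.cons_erase haq]
      rwa [hq, count_mul_faaC_cons _ han] at hne
  · intro p _ _
    simp only [e, Nat.Partition.partitionWithPartEquiv_symm_apply_parts]
    rw [count_mul_faaC_cons _ han]

theorem succ_mul_faaCSum_succ (n j : ℕ) :
    (j + 1 : ℚ) * faaCSum n (j + 1) = ∑ a ∈ Finset.Icc 1 n, n.choose a * faaCSum (n - a) j := by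
  have hcard : ∀ q : n.Partition, ∑ a ∈ Finset.Icc 1 n, (q.parts.count a : ℚ) = q.parts.card := by
    intro q
    exact_mod_cast Multiset.sum_count_eq_card fun a ha =>
      Finset.mem_Icc.mpr ⟨q.parts_pos ha, q.le_of_mem_parts ha⟩
  calc (j + 1 : ℚ) * faaCSum n (j + 1)
      = ∑ q ∈ Finset.univ.filter fun q : n.Partition => q.parts.card = j + 1,
          ∑ a ∈ Finset.Icc 1 n, (q.parts.count a : ℚ) * faaC n q.parts := by
        rw [faaCSum, Finset.mul_sum]
        refine Finset.sum_congr rfl fun q hq => ?_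
        rw [← Finset.sum_mul, hcard, (Finset.mem_filter.mp hq).2]
        push_cast; rfl
    _ = ∑ a ∈ Finset.Icc 1 n, n.choose a * faaCSum (n - a) j := by
        rw [Finset.sum_comm]
        refine Finset.sum_congr rfl fun a ha => ?_
        obtain ⟨ha1, han⟩ := Finset.mem_Icc.mp ha
        exact sum_count_mul_faaC ha1 han j

theorem PowerSeries.coeff_pow_of_lt {R : Type*} [CommSemiring R] {f : R⟦X⟧}
    (hf : constantCoeff f = 0) {m N : ℕ} (h : m < N) : coeff m (f ^ N) = 0 :=
  X_pow_dvd_iff.mp (pow_dvd_pow_of_dvd (X_dvd_iff.mpr hf) N) m h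

theorem coeff_exp_sub_one_mul (f : ℚ⟦X⟧) (n : ℕ) :
    coeff n ((exp ℚ - 1) * f) = ∑ a ∈ Finset.Icc 1 n, coeff (n - a) f / a ! := by
  rw [coeff_mul, Finset.Nat.sum_antidiagonal_eq_sum_range_succ
    (fun a b => coeff a (exp ℚ - 1) * coeff b f)]
  have hsub : Finset.Icc 1 n ⊆ Finset.range (n + 1) := fun a ha => by
    simp only [Finset.mem_Icc, Finset.mem_range] at ha ⊢; omega
  rw [← Finset.sum_subset hsub fun a ha ha' => ?_]
  · refine Finset.sum_congr rfl fun a ha => ?_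
    have ha0 : a ≠ 0 := by simp only [Finset.mem_Icc] at ha; omega
    simp [coeff_exp, coeff_one, ha0, div_eq_inv_mul]
  · have ha0 : a = 0 := by simp only [Finset.mem_Icc, Finset.mem_range] at ha ha'; omega
    simp [ha0]

theorem faaCSum_eq_coeff (n j : ℕ) : faaCSum n j = n ! / j ! * coeff n ((exp ℚ - 1) ^ j) := by
  induction j generalizing n with
  | zero => simp +contextual [faaCSum_zero_right, coeff_one]
  | succ j ih =>
    refine mul_left_cancel₀ (by positivity : (j + 1 : ℚ) ≠ 0) ?_
    rw [succ_mul_faaCSum_succ, pow_succ', coeff_exp_sub_one_mul, Finset.mul_sum, Finset.mul_sum]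
    refine Finset.sum_congr rfl fun a ha => ?_
    rw [ih, Nat.cast_choose ℚ (Finset.mem_Icc.mp ha).2, Nat.factorial_succ]
    push_cast
    field_simp

noncomputable def logExpTrunc (N : ℕ) : ℚ⟦X⟧ :=
  ∑ j ∈ Finset.Icc 1 N, C ((-1) ^ (j - 1) / j : ℚ) * (exp ℚ - 1) ^ j

theorem derivative_exp_sub_one : d⁄dX ℚ (exp ℚ - 1) = exp ℚ := by
  rw [map_sub, derivative_exp, Derivation.map_one_eq_zero, sub_zero]

theorem derivative_C_mul_exp_sub_one_pow {j : ℕ} (hj : 1 ≤ j) :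
    d⁄dX ℚ (C ((-1) ^ (j - 1) / j : ℚ) * (exp ℚ - 1) ^ j) =
      (-(exp ℚ - 1)) ^ (j - 1) * exp ℚ := by
  have hj0 : (j : ℚ) ≠ 0 := by exact_mod_cast (by omega : j ≠ 0)
  have hcoeff : C ((-1) ^ (j - 1) / j : ℚ) * j = (-1) ^ (j - 1) := by
    rw [← map_natCast C j, ← map_mul, div_mul_cancel₀ _ hj0, map_pow, map_neg, map_one]
  rw [Derivation.leibniz, derivative_C, smul_zero, add_zero, Derivation.leibniz_pow,
    derivative_exp_sub_one, neg_pow (exp ℚ - 1)]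
  simp only [smul_eq_mul, nsmul_eq_mul]
  linear_combination ((exp ℚ - 1) ^ (j - 1) * exp ℚ) * hcoeff

theorem derivative_logExpTrunc (N : ℕ) : d⁄dX ℚ (logExpTrunc N) = 1 - (-(exp ℚ - 1)) ^ N := by
  rw [logExpTrunc, map_sum, ← geom_sum_mul_neg, sub_neg_eq_add, add_sub_cancel,
    Finset.sum_congr rfl fun j hj => derivative_C_mul_exp_sub_one_pow (Finset.mem_Icc.mp hj).1,
    ← Finset.sum_mul, ← Finset.Ico_add_one_right_eq_Icc, Finset.sum_Ico_eq_sum_range]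
  simp

theorem coeff_logExpTrunc_eq_zero {n N : ℕ} (hn : 2 ≤ n) (hnN : n ≤ N) :
    coeff n (logExpTrunc N) = 0 := by
  obtain ⟨m, rfl⟩ : ∃ m, n = m + 1 := ⟨n - 1, by omega⟩
  have h := coeff_derivative (logExpTrunc N) m
  rw [derivative_logExpTrunc, map_sub, coeff_one, if_neg (by omega),
    coeff_pow_of_lt (by simp) (by omega), sub_zero] at h
  exact (mul_eq_zero.mp h.symm).resolve_right (by positivity)

theorem alternating_sum_faaC (n : ℕ) (hn : 2 ≤ n) :
    ∑ j ∈ Finset.Icc 1 n, (-1 : ℚ) ^ (j - 1) * ((j - 1).factorial : ℚ) *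
      ∑ p ∈ Finset.univ.filter fun p : n.Partition => p.parts.card = j, faaC n p.parts = 0 := by
  calc _ = n ! * coeff n (logExpTrunc n) := by
        rw [logExpTrunc, map_sum, Finset.mul_sum]
        refine Finset.sum_congr rfl fun j hj => ?_
        obtain ⟨k, rfl⟩ : ∃ k, j = k + 1 := ⟨j - 1, by have := (Finset.mem_Icc.mp hj).1; omega⟩
        rw [← faaCSum, faaCSum_eq_coeff, coeff_C_mul, Nat.factorial_succ, add_tsub_cancel_right]
        push_cast
        field_simp
    _ = 0 := by rw [coeff_logExpTrunc_eq_zero hn le_rfl, mul_zero]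
end

section
/- The n-th derivative of x ↦ e^{e^x} evaluated at x = 0 equals e · L_n, where L_n = ∑_{k : |k| = n} C^n_k is the sum over all partitions k of n of the coefficients C^n_k. (Equivalently, L_n is the n-th Bell number.) -/
open Finset

theorem faaC_eq_bell {n : ℕ} {m : Multiset ℕ} (hsum : m.sum = n) (h0 : 0 ∉ m) :
    faaC n m = m.bell := by
  have h := m.bell_mul_eq
  rw [Finset.erase_eq_of_notMem (by simpa using h0), hsum] at h
  rw [faaC, ← h,
    div_eq_iff (by simp [Multiset.prod_eq_zero_iff, Finset.prod_eq_zero_iff, Nat.factorial_ne_zero])]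
  push_cast
  ring

theorem iteratedDeriv_succ_exp_exp (n : ℕ) (x : ℝ) :
    iteratedDeriv (n + 1) (fun x => Real.exp (Real.exp x)) x =
      ∑ i ∈ range (n + 1), n.choose i * Real.exp x *
        iteratedDeriv (n - i) (fun x => Real.exp (Real.exp x)) x := by
  have hderiv : deriv (fun x => Real.exp (Real.exp x)) =
      fun x => Real.exp x * Real.exp (Real.exp x) := by
    ext x
    simp [mul_comm]
  rw [iteratedDeriv_succ', hderiv, iteratedDeriv_fun_mul (by fun_prop) (by fun_prop)]
  simp [iteratedDeriv_eq_iterate, Real.iter_deriv_exp]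

theorem iteratedDeriv_exp_exp_zero_eq_bell (n : ℕ) :
    iteratedDeriv n (fun x => Real.exp (Real.exp x)) 0 = Real.exp 1 * n.bell := by
  induction n using Nat.strong_induction_on with
  | _ n ih =>
    rcases n with _ | n
    · simp
    rw [iteratedDeriv_succ_exp_exp, Nat.bell_succ, ← Nat.range_succ_eq_Iic]
    push_cast
    rw [mul_sum]
    refine sum_congr rfl fun i _ => ?_
    rw [ih (n - i) (by omega), Real.exp_zero]
    ring

theorem iteratedDeriv_exp_exp (n : ℕ) :
    iteratedDeriv n (fun x => Real.exp (Real.exp x)) 0 =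
      Real.exp 1 * ((∑ p : n.Partition, faaC n p.parts : ℚ) : ℝ) := by
  rw [iteratedDeriv_exp_exp_zero_eq_bell, Nat.bell_eq_sum_partition]
  congr 1
  push_cast
  refine sum_congr rfl fun p _ => ?_
  rw [faaC_eq_bell p.parts_sum fun h => (p.parts_pos h).false]
  simp
end

section
/- Faà di Bruno formula in partition form: if f and g are n-times continuously differentiable on ℝ, then (f ∘ g)^{(n)}(x) = ∑_{j=1}^n f^{(j)}(g(x)) · ∑_{k} C^n_k · ∏_{p=1}^j g^{(k_p)}(x), where the inner sum is over all weakly decreasing j-tuples k = (k₁,…,k_j) of positive integers with k₁ + ⋯ + k_j = n, and C^n_k = (n!/∏_p k_p!)/∏_i N(k,i)!. -/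
/-!
Mathlib's Faà di Bruno formula writes `(f ∘ g)^{(n)}(x)` as a sum over the ordered finpartitions
`c` of `Fin n` of `f^{(|c|)}(g x) ∏_{B ∈ c} g^{(|B|)}(x)`, a term that only depends on the multiset
of block sizes of `c`. Grouping the sum by this multiset, it remains to see that exactly
`Multiset.bell k = n! / (∏ k_p! ∏_i N(k,i)!)` ordered finpartitions have block sizes `k`.
Both sides obey the same recursion: an ordered finpartition of `Fin (n + 1)` is one of `Fin n`
with a new point `0` added either as a singleton block or to an existing block.
-/

open Finset
open scoped Nat

namespace Multiset

theorem cons_eq_iff_mem_and_eq_erase {α : Type*} [DecidableEq α] {a : α}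
    {s t : Multiset α} : a ::ₘ s = t ↔ a ∈ t ∧ s = t.erase a := by
  constructor
  · rintro rfl
    exact ⟨mem_cons_self a s, (erase_cons_head a s).symm⟩
  · rintro ⟨ha, rfl⟩
    exact cons_erase ha

theorem prod_factorial_count_cons_s16 {a : ℕ} (ha : a ≠ 0) (m : Multiset ℕ) :
    ∏ j ∈ (a ::ₘ m).toFinset.erase 0, ((a ::ₘ m).count j)! =
      (m.count a + 1) * ∏ j ∈ m.toFinset.erase 0, (m.count j)! := by
  have hsub : m.toFinset.erase 0 ⊆ (a ::ₘ m).toFinset.erase 0 :=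
    erase_subset_erase _ (by rw [toFinset_cons]; exact subset_insert _ _)
  have hmem : a ∈ (a ::ₘ m).toFinset.erase 0 := by simp [ha]
  rw [prod_subset hsub (f := fun j => (m.count j)!) fun j _ hj => by simp_all,
    ← mul_prod_erase _ _ hmem, ← mul_prod_erase _ (fun j => (m.count j)!) hmem,
    count_cons_self, Nat.factorial_succ, mul_assoc]
  congr 2
  exact prod_congr rfl fun j hj => by rw [count_cons_of_ne (ne_of_mem_erase hj)]

theorem bell_cons_mul_count {a : ℕ} (ha : a ≠ 0) (m : Multiset ℕ) :
    (a ::ₘ m).bell * (a ::ₘ m).count a = (m.sum + a).choose a * m.bell := by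
  set D := (m.map (· !)).prod * ∏ j ∈ m.toFinset.erase 0, (m.count j)!
  have hD : 0 < D := Nat.pos_of_ne_zero <| mul_ne_zero (by simp [prod_eq_zero_iff,
    Nat.factorial_ne_zero]) (prod_ne_zero_iff.2 fun _ _ => Nat.factorial_ne_zero _)
  refine Nat.eq_of_mul_eq_mul_right (mul_pos (Nat.factorial_pos a) hD) ?_
  have hcons := bell_mul_eq (a ::ₘ m)
  rw [map_cons, prod_cons, prod_factorial_count_cons_s16 ha, sum_cons] at hcons
  calc (a ::ₘ m).bell * (a ::ₘ m).count a * (a ! * D) = (a + m.sum)! := by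
        rw [← hcons, count_cons_self]; ring
    _ = (m.sum + a).choose a * a ! * m.sum ! := by
      rw [add_comm, ← Nat.add_choose_mul_factorial_mul_factorial]; ring
    _ = _ := by rw [← bell_mul_eq m]; ring

end Multiset

namespace OrderedFinpartition

variable {n : ℕ}

def sizes (c : OrderedFinpartition n) : Multiset ℕ := univ.val.map c.partSize

theorem card_sizes (c : OrderedFinpartition n) : c.sizes.card = c.length := by
  simp [sizes]

theorem sizes_sum (c : OrderedFinpartition n) : c.sizes.sum = n := by
  simpa [sizes, sum_eq_multiset_sum] using Fintype.card_congr c.equivSigma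

theorem pos_of_mem_sizes {c : OrderedFinpartition n} {m : ℕ} (hm : m ∈ c.sizes) : 0 < m := by
  obtain ⟨i, -, rfl⟩ := Multiset.mem_map.1 hm
  exact c.partSize_pos i

theorem count_sizes (c : OrderedFinpartition n) (m : ℕ) :
    c.sizes.count m = #{i | c.partSize i = m} := by
  rw [sizes, Multiset.count_map, card_def, filter_val]
  exact congrArg Multiset.card (Multiset.filter_congr fun _ _ => eq_comm)

theorem prod_map_sizes {M : Type*} [CommMonoid M] (c : OrderedFinpartition n) (g : ℕ → M) :
    (c.sizes.map g).prod = ∏ i, g (c.partSize i) := by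
  rw [sizes, Multiset.map_map, prod_eq_multiset_prod]
  rfl

theorem sizes_extendLeft (c : OrderedFinpartition n) : c.extendLeft.sizes = 1 ::ₘ c.sizes := by
  change (univ : Finset (Fin (c.length + 1))).val.map (Fin.cons 1 c.partSize) = _
  rw [Fin.univ_val_map, List.ofFn_succ]
  simp [sizes, Fin.univ_val_map]

theorem sizes_extendMiddle (c : OrderedFinpartition n) (i : Fin c.length) :
    (c.extendMiddle i).sizes = (c.partSize i + 1) ::ₘ c.sizes.erase (c.partSize i) := by
  have huniv : (univ : Finset (Fin c.length)).val = i ::ₘ (univ.erase i).val :=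
    (Multiset.cons_erase (mem_univ_val i)).symm
  have hrest : ((univ.erase i).val.map (Function.update c.partSize i (c.partSize i + 1))) =
      (univ.erase i).val.map c.partSize :=
    Multiset.map_congr rfl fun j hj => Function.update_of_ne (ne_of_mem_erase (s := univ) hj) _ _
  change (univ : Finset (Fin c.length)).val.map (Function.update c.partSize i (c.partSize i + 1)) =
    _
  rw [sizes, huniv, Multiset.map_cons, Multiset.map_cons, Function.update_self, hrest,
    Multiset.erase_cons_head]

def toPartition (c : OrderedFinpartition n) : n.Partition where
  parts := c.sizes
  parts_pos := c.pos_of_mem_sizes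
  parts_sum := c.sizes_sum

theorem sizes_extendMiddle_eq_iff (c : OrderedFinpartition n) (i : Fin c.length)
    (k : Multiset ℕ) : (c.extendMiddle i).sizes = k ↔
      c.partSize i + 1 ∈ k ∧ c.sizes = c.partSize i ::ₘ k.erase (c.partSize i + 1) := by
  have hi : c.partSize i ∈ c.sizes := Multiset.mem_map_of_mem _ (mem_univ_val i)
  rw [sizes_extendMiddle, Multiset.cons_eq_iff_mem_and_eq_erase, eq_comm (a := c.sizes),
    Multiset.cons_eq_iff_mem_and_eq_erase, eq_comm (b := c.sizes.erase _)]
  exact and_congr_right fun _ => (and_iff_right hi).symm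

theorem card_filter_extendMiddle_sizes_eq (c : OrderedFinpartition n) (k : Multiset ℕ) :
    #{i | (c.extendMiddle i).sizes = k} =
      ∑ v ∈ k.toFinset, if c.sizes = (v - 1) ::ₘ k.erase v then c.sizes.count (v - 1) else 0 := by
  rw [card_eq_sum_card_fiberwise (f := fun i => c.partSize i + 1) (t := k.toFinset) fun i hi => by
    simpa using ((sizes_extendMiddle_eq_iff c i k).1 (mem_filter.1 hi).2).1]
  refine sum_congr rfl fun v hv => ?_
  have hfiber : ∀ i, ((c.extendMiddle i).sizes = k ∧ c.partSize i + 1 = v) ↔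
      (c.partSize i = v - 1 ∧ c.sizes = (v - 1) ::ₘ k.erase v) := fun i => by
    rw [sizes_extendMiddle_eq_iff]
    have := c.partSize_pos i
    constructor
    · rintro ⟨⟨-, h⟩, rfl⟩
      exact ⟨by omega, by simpa using h⟩
    · rintro ⟨hi, h⟩
      obtain rfl : c.partSize i + 1 = v := by omega
      exact ⟨⟨Multiset.mem_toFinset.1 hv, by simpa using h⟩, rfl⟩
  rw [filter_filter, filter_congr fun i _ => hfiber i, count_sizes]
  split_ifs with hK <;> simp [hK]

/-- `v` runs over the possible sizes of the block containing the new point `0`. -/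
theorem card_filter_sizes_eq_succ (k : Multiset ℕ) :
    #{c : OrderedFinpartition (n + 1) | c.sizes = k} =
      #{c : OrderedFinpartition n | 1 ::ₘ c.sizes = k} +
        ∑ v ∈ k.toFinset, ((v - 1) ::ₘ k.erase v).count (v - 1) *
          #{c : OrderedFinpartition n | c.sizes = (v - 1) ::ₘ k.erase v} := by
  calc #{c : OrderedFinpartition (n + 1) | c.sizes = k}
      = ∑ c : OrderedFinpartition n, ∑ o : Option (Fin c.length),
          if (c.extend o).sizes = k then 1 else 0 := by
        rw [card_filter, ← (extendEquiv n).sum_comp, Fintype.sum_sigma]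
        rfl
    _ = ∑ c : OrderedFinpartition n,
          ((if 1 ::ₘ c.sizes = k then 1 else 0) + #{i | (c.extendMiddle i).sizes = k}) := by
        simp only [Fintype.sum_option, extend_none, extend_some, sizes_extendLeft, card_filter]
        rfl
    _ = _ := by
        simp_rw [sum_add_distrib, ← card_filter, card_filter_extendMiddle_sizes_eq]
        rw [sum_comm]
        congr 1
        refine sum_congr rfl fun v _ => ?_
        rw [← sum_filter, card_eq_sum_ones, mul_sum, mul_one]
        exact sum_congr rfl fun c hc => by rw [(mem_filter.1 hc).2]

theorem card_filter_sizes_eq_bell {k : Multiset ℕ} (hk : k.sum = n) (h0 : 0 ∉ k) :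
    #{c : OrderedFinpartition n | c.sizes = k} = k.bell := by
  induction n generalizing k with
  | zero =>
    obtain rfl : k = 0 :=
      Multiset.eq_zero_of_forall_notMem fun x hx => h0 (Multiset.sum_eq_zero_iff.1 hk x hx ▸ hx)
    rw [Multiset.bell_zero, filter_true_of_mem fun c _ => ?_, card_univ, Fintype.card_unique]
    rw [← Multiset.card_eq_zero, card_sizes]
    exact Nat.le_zero.1 c.length_le
  | succ n ih =>
    have hsum {v : ℕ} (hv : v ∈ k) : (k.erase v).sum + v = n + 1 := by
      rw [add_comm, Multiset.sum_erase hv, hk]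
    have h0erase {v : ℕ} : 0 ∉ k.erase v := fun h => h0 (Multiset.mem_of_mem_erase h)
    have hleft : #{c : OrderedFinpartition n | 1 ::ₘ c.sizes = k} =
        ∑ v ∈ k.toFinset, if v = 1 then (k.erase 1).bell else 0 := by
      simp only [sum_ite_eq', Multiset.mem_toFinset]
      simp_rw [Multiset.cons_eq_iff_mem_and_eq_erase]
      split_ifs with h1
      · simpa [h1] using ih (by have := hsum h1; omega) h0erase
      · simp [h1]
    have hmiddle : ∀ v ∈ k.toFinset, ((v - 1) ::ₘ k.erase v).count (v - 1) *
          #{c : OrderedFinpartition n | c.sizes = (v - 1) ::ₘ k.erase v} =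
        if v = 1 then 0 else n.choose (v - 1) * (k.erase v).bell := by
      intro v hv
      have hv := Multiset.mem_toFinset.1 hv
      have hvpos : v ≠ 0 := fun h => h0 (h ▸ hv)
      split_ifs with h1
      · subst h1
        rw [tsub_self, card_eq_zero.2 (filter_eq_empty_iff.2 fun c _ h =>
          (c.pos_of_mem_sizes (h ▸ Multiset.mem_cons_self 0 _)).false), mul_zero]
      · have hv1 : v - 1 ≠ 0 := by omega
        rw [ih (by rw [Multiset.sum_cons]; have := hsum hv; omega)
          (by simp [hv1.symm, h0erase]), mul_comm, Multiset.bell_cons_mul_count hv1]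
        congr 2
        have := hsum hv
        omega
    rw [card_filter_sizes_eq_succ, hleft, sum_congr rfl hmiddle, ← sum_add_distrib,
      show k.bell = (⟨k, fun hi => Nat.pos_of_ne_zero (by rintro rfl; exact h0 hi), hk⟩ :
        (n + 1).Partition).parts.bell from rfl, Nat.bell_eq_sum_erase]
    refine sum_congr rfl fun v _ => ?_
    split_ifs with h1 <;> simp [h1]

theorem sum_comp_sizes {M : Type*} [AddCommMonoid M] (F : Multiset ℕ → M) :
    ∑ c : OrderedFinpartition n, F c.sizes = ∑ p : n.Partition, p.parts.bell • F p.parts := by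
  rw [← sum_fiberwise_of_maps_to (g := toPartition) (t := univ) fun _ _ => mem_univ _]
  refine sum_congr rfl fun p _ => ?_
  have hfiber : #{c : OrderedFinpartition n | c.toPartition = p} =
      #{c : OrderedFinpartition n | c.sizes = p.parts} :=
    congrArg card <| filter_congr fun c _ => by rw [Nat.Partition.ext_iff]; rfl
  rw [sum_congr rfl fun c hc => by rw [show c.sizes = p.parts from
      congrArg Nat.Partition.parts (mem_filter.1 hc).2], sum_const, hfiber,
    card_filter_sizes_eq_bell p.parts_sum fun h => (p.parts_pos h).false]

end OrderedFinpartition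

namespace Nat.Partition

theorem card_parts_mem_Icc {n : ℕ} (hn : 1 ≤ n) (p : n.Partition) :
    p.parts.card ∈ Icc 1 n := by
  refine mem_Icc.2 ⟨Multiset.card_pos.2 fun h => ?_, ?_⟩
  · have := p.parts_sum
    simp [h] at this
    omega
  · simpa [p.parts_sum] using Multiset.card_nsmul_le_sum fun _ => p.parts_pos

end Nat.Partition

theorem faaC_eq_bell_s16 {n : ℕ} (p : n.Partition) : faaC n p.parts = p.parts.bell := by
  have h0 : 0 ∉ p.parts.toFinset := fun h => (p.parts_pos (Multiset.mem_toFinset.1 h)).false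
  have hbell : (p.parts.bell : ℚ) * (((p.parts.map Nat.factorial).prod : ℚ) *
      ∏ i ∈ p.parts.toFinset, ((p.parts.count i)! : ℚ)) = n ! := by
    have := Multiset.bell_mul_eq p.parts
    rw [erase_eq_of_notMem h0, p.parts_sum, mul_assoc] at this
    exact_mod_cast this
  rw [faaC, ← hbell, mul_div_cancel_right₀]
  exact right_ne_zero_of_mul (a := (p.parts.bell : ℚ)) (by rw [hbell]; positivity)

/-- Faà di Bruno's formula in partition form: for `n`-times continuously differentiable
`f, g : ℝ → ℝ`,
`(f ∘ g)^{(n)}(x) = ∑_{j=1}^n f^{(j)}(g x) ∑_{k ⊢ n, length j} C^n_k ∏_p g^{(k_p)}(x)`. -/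
theorem faa_di_bruno (n : ℕ) (hn : 1 ≤ n) (f g : ℝ → ℝ)
    (hf : ContDiff ℝ n f) (hg : ContDiff ℝ n g) (x : ℝ) :
    iteratedDeriv n (f ∘ g) x =
      ∑ j ∈ Finset.Icc 1 n, iteratedDeriv j f (g x) *
        ∑ p ∈ Finset.univ.filter fun p : n.Partition => p.parts.card = j,
          ((faaC n p.parts : ℚ) : ℝ) * (p.parts.map fun m => iteratedDeriv m g x).prod := by
  set term : Multiset ℕ → ℝ := fun k =>
    iteratedDeriv k.card f (g x) * (k.map fun m => iteratedDeriv m g x).prod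
  have hsizes (c : OrderedFinpartition n) :
      iteratedDeriv c.length f (g x) * ∏ i, iteratedDeriv (c.partSize i) g x = term c.sizes := by
    simp only [term, c.card_sizes, c.prod_map_sizes]
  rw [iteratedDeriv_comp_eq_sum_orderedFinpartition hf.contDiffAt hg.contDiffAt le_rfl,
    sum_congr rfl fun c _ => hsizes c, OrderedFinpartition.sum_comp_sizes,
    ← sum_fiberwise_of_maps_to fun p _ => p.card_parts_mem_Icc hn]
  refine sum_congr rfl fun j _ => ?_
  rw [mul_sum]
  refine sum_congr rfl fun p hp => ?_
  rw [faaC_eq_bell_s16, ← (mem_filter.1 hp).2, nsmul_eq_mul]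
  push_cast
  ring
end
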